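/- arXiv:1206.4091 — 5 statements merged into one kernel-verified Lean document; each statement's English description precedes it below -/
import Mathlib

section
/- (IM validity.) Suppose X = a(θ, U) with U ~ P_U, the predictive random set S is valid (Q(u) = P(S ∌ u) satisfies P_U(Q(U) ≥ 1-α) ≤ α for all α), and Θ_x(S) = ⋃_{u∈S} Θ_x(u) is nonempty with probability 1 for all x, where Θ_x(u) = {θ : x = a(θ,u)}. Then for every assertion A ⊆ Θ, every θ ∉ A, and every α ∈ (0,1): P_{X|θ}(bel_X(A; S) ≥ 1 - α) ≤ α, where bel_x(A; S) = P_S(Θ_x(S) ⊆ A). -/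
open MeasureTheory Set

/-! If the auxiliary value `u` that generated `x = a θ u` lies in the random set `S`, then `θ`
itself lies in `Θ_x(S)`, so `Θ_x(S) ⊄ A` whenever `θ ∉ A`. Hence `bel_x(A; S) ≤ Q(u)`, and the
validity of `S` bounds the distribution of `Q(U)`, hence of `bel_X(A; S)`. -/

theorem notMem_of_biUnion_eq_subset {U 𝒳 Θ : Type*} {a : Θ → U → 𝒳} {s : Set U}
    {A : Set Θ} {θ : Θ} (hθ : θ ∉ A) {u : U}
    (hsub : (⋃ u' ∈ s, {θ' : Θ | a θ u = a θ' u'}) ⊆ A) : u ∉ s :=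
  fun hu => hθ (hsub (mem_biUnion hu rfl))

theorem measure_biUnion_eq_subset_le_measure_notMem {U 𝒳 Θ Ω : Type*} [MeasurableSpace Ω]
    (P : Measure Ω) (a : Θ → U → 𝒳) (S : Ω → Set U) {A : Set Θ} {θ : Θ} (hθ : θ ∉ A)
    (u : U) :
    P {ω | (⋃ u' ∈ S ω, {θ' : Θ | a θ u = a θ' u'}) ⊆ A} ≤ P {ω | u ∉ S ω} :=
  measure_mono fun _ => notMem_of_biUnion_eq_subset hθ

theorem im_validity_general {U 𝒳 Θ Ω : Type*} [MeasurableSpace U] [MeasurableSpace Ω]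
    (μ : Measure U)
    (P : Measure Ω)
    (a : Θ → U → 𝒳) (S : Ω → Set U)
    (hvalid : ∀ α ∈ Set.Ioo (0:ℝ) 1,
      μ {u | ENNReal.ofReal (1 - α) ≤ P {ω | u ∉ S ω}} ≤ ENNReal.ofReal α)
    (A : Set Θ) (θ : Θ) (hθ : θ ∉ A) (α : ℝ) (hα : α ∈ Set.Ioo (0:ℝ) 1) :
    μ {u | ENNReal.ofReal (1 - α)
        ≤ P {ω | (⋃ u' ∈ S ω, {θ' : Θ | a θ u = a θ' u'}) ⊆ A}} ≤ ENNReal.ofReal α :=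
  calc
    _ ≤ μ {u | ENNReal.ofReal (1 - α) ≤ P {ω | u ∉ S ω}} :=
      measure_mono fun u hu => hu.trans (measure_biUnion_eq_subset_le_measure_notMem P a S hθ u)
    _ ≤ ENNReal.ofReal α := hvalid α hα

/-- IM validity (Theorem 2): suppose `X = a(θ,U)` with `U ~ μ`, the predictive random
set `S` is valid (`Q(u) = P(S ∌ u)` satisfies `μ{u : Q(u) ≥ 1-α} ≤ α` for all `α`),
and `Θ_x(S) = ⋃_{u ∈ S} {θ : x = a(θ,u)}` is nonempty with `P`-probability 1 for all `x`.
Then for every assertion `A`, every `θ ∉ A`, and every `α ∈ (0,1)`,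
`P_{X|θ}(bel_X(A;S) ≥ 1-α) ≤ α`, where `bel_x(A;S) = P(Θ_x(S) ⊆ A)`. -/
theorem im_validity {U 𝒳 Θ Ω : Type*} [MeasurableSpace U] [MeasurableSpace Ω]
    (μ : Measure U) [IsProbabilityMeasure μ]
    (P : Measure Ω) [IsProbabilityMeasure P]
    (a : Θ → U → 𝒳) (S : Ω → Set U)
    (hvalid : ∀ α ∈ Set.Ioo (0:ℝ) 1,
      μ {u | ENNReal.ofReal (1 - α) ≤ P {ω | u ∉ S ω}} ≤ ENNReal.ofReal α)
    (hne : ∀ x : 𝒳, P {ω | ¬ (⋃ u ∈ S ω, {θ' : Θ | x = a θ' u}).Nonempty} = 0)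
    (A : Set Θ) (θ : Θ) (hθ : θ ∉ A) (α : ℝ) (hα : α ∈ Set.Ioo (0:ℝ) 1) :
    μ {u | ENNReal.ofReal (1 - α)
        ≤ P {ω | (⋃ u' ∈ S ω, {θ' : Θ | a θ u = a θ' u'}) ⊆ A}} ≤ ENNReal.ofReal α :=
  im_validity_general μ P a S hvalid A θ hθ α hα
end

section
/- (Belief bounded by fiducial probability.) Assume Θ_x(u) ≠ ∅ for all x, u, and let S be a valid predictive random set. Then for every x and every A ⊆ Θ: bel_x(A; S) ≤ bel_x(A; S₀), where S₀ = {U} is the singleton predictive random set with U ~ P_U, i.e. bel_x(A; S₀) = P_U(Θ_x(U) ⊆ A) is the fiducial probability of A. -/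
open MeasureTheory Set
open scoped ENNReal

/-!
For `u` outside `T = {u | Θ_x(u) ⊆ A}` the event `S ⊆ T` forces `u ∉ S`, so the plausibility
`Q u = P(u ∉ S)` is at least `b = P(S ⊆ T)` on `Tᶜ`. Validity makes `Q(U)` stochastically no
larger than a uniform variable, hence `μ Tᶜ ≤ μ {b ≤ Q} ≤ 1 - b`, i.e. `b ≤ μ T`.
-/

section Validity

variable {U : Type*} [MeasurableSpace U] {μ : Measure U} {Q : U → ℝ≥0∞}

lemma measure_one_sub_le_le_of_valid
    (hvalid : ∀ α ∈ Ioo (0 : ℝ) 1, μ {u | ENNReal.ofReal (1 - α) ≤ Q u} ≤ ENNReal.ofReal α)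
    {a : ℝ≥0∞} (ha₀ : 0 < a) (ha₁ : a < 1) :
    μ {u | 1 - a ≤ Q u} ≤ a := by
  have ha_top : a ≠ ⊤ := ha₁.ne_top
  have hα : a.toReal ∈ Ioo (0 : ℝ) 1 :=
    ⟨ENNReal.toReal_pos ha₀.ne' ha_top, ENNReal.toReal_lt_of_lt_ofReal (by simpa using ha₁)⟩
  simpa [ENNReal.ofReal_sub, ha_top] using hvalid _ hα

lemma measure_le_le_one_sub_of_valid [IsProbabilityMeasure μ]
    (hvalid : ∀ α ∈ Ioo (0 : ℝ) 1, μ {u | ENNReal.ofReal (1 - α) ≤ Q u} ≤ ENNReal.ofReal α)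
    (b : ℝ≥0∞) :
    μ {u | b ≤ Q u} ≤ 1 - b := by
  refine le_of_forall_gt_imp_ge_of_dense fun a ha => ?_
  rcases lt_or_ge a 1 with ha₁ | ha₁
  · have hab : 1 - a ≤ b := by
      rw [tsub_le_iff_right, add_comm, ← tsub_le_iff_right]
      exact ha.le
    calc μ {u | b ≤ Q u} ≤ μ {u | 1 - a ≤ Q u} := measure_mono fun u hu => hab.trans hu
      _ ≤ a := measure_one_sub_le_le_of_valid hvalid (pos_of_gt ha) ha₁
  · exact (prob_le_one).trans ha₁

end Validity

lemma le_measure_of_measure_compl_le_one_sub {α : Type*} [MeasurableSpace α] {μ : Measure α}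
    [IsProbabilityMeasure μ] {s : Set α} {b : ℝ≥0∞} (hb : b ≤ 1) (h : μ sᶜ ≤ 1 - b) :
    b ≤ μ s := by
  have hcover : 1 ≤ μ s + (1 - b) := by
    simpa using (measure_univ_le_add_compl (μ := μ) s).trans (add_le_add_right h _)
  rwa [← tsub_le_iff_right, ENNReal.sub_sub_cancel ENNReal.one_ne_top hb] at hcover

theorem belief_le_fiducial_general {U 𝒳 Θ Ω : Type*} [MeasurableSpace U] [MeasurableSpace Ω]
    (μ : Measure U) [IsProbabilityMeasure μ]
    (P : Measure Ω) [IsProbabilityMeasure P]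
    (a : Θ → U → 𝒳) (S : Ω → Set U)
    (hvalid : ∀ α ∈ Set.Ioo (0:ℝ) 1,
      μ {u | ENNReal.ofReal (1 - α) ≤ P {ω | u ∉ S ω}} ≤ ENNReal.ofReal α)
    (x : 𝒳) (A : Set Θ) :
    P {ω | (⋃ u ∈ S ω, {θ' : Θ | x = a θ' u}) ⊆ A}
      ≤ μ {u | {θ' : Θ | x = a θ' u} ⊆ A} := by
  set T : Set U := {u | {θ' : Θ | x = a θ' u} ⊆ A}
  have hevent : {ω | (⋃ u ∈ S ω, {θ' : Θ | x = a θ' u}) ⊆ A} = {ω | S ω ⊆ T} := by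
    simp_rw [iUnion₂_subset_iff]
    rfl
  rw [hevent]
  set b := P {ω | S ω ⊆ T}
  have hcompl : Tᶜ ⊆ {u | b ≤ P {ω | u ∉ S ω}} := fun u hu =>
    measure_mono fun ω hω huS => hu (hω huS)
  exact le_measure_of_measure_compl_le_one_sub prob_le_one
    ((measure_mono hcompl).trans (measure_le_le_one_sub_of_valid hvalid b))

/-- Proposition 1 (belief bounded by fiducial probability): if `Θ_x(u) ≠ ∅` for all
`x, u` and `S` is a valid predictive random set, then for every `x` and every `A`,
`bel_x(A;S) = P(Θ_x(S) ⊆ A) ≤ μ{u : Θ_x(u) ⊆ A} = bel_x(A;S₀)`, the fiducial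
probability of `A`. -/
theorem belief_le_fiducial {U 𝒳 Θ Ω : Type*} [MeasurableSpace U] [MeasurableSpace Ω]
    (μ : Measure U) [IsProbabilityMeasure μ]
    (P : Measure Ω) [IsProbabilityMeasure P]
    (a : Θ → U → 𝒳) (S : Ω → Set U)
    (hvalid : ∀ α ∈ Set.Ioo (0:ℝ) 1,
      μ {u | ENNReal.ofReal (1 - α) ≤ P {ω | u ∉ S ω}} ≤ ENNReal.ofReal α)
    (hne : ∀ (x : 𝒳) (u : U), {θ' : Θ | x = a θ' u}.Nonempty)
    (x : 𝒳) (A : Set Θ) :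
    P {ω | (⋃ u ∈ S ω, {θ' : Θ | x = a θ' u}) ⊆ A}
      ≤ μ {u | {θ' : Θ | x = a θ' u} ⊆ A} :=
  belief_le_fiducial_general μ P a S hvalid x A
end

section
/- (Key lemma for the complete-class theorem.) Let S be a valid predictive random set on (U, P_U), let {U_x : x ∈ X} be measurable subsets of U, and set η(x) = P_S(S ⊆ U_x). Then for any X₀ ⊆ X with ⋂_{x∈X₀} U_x measurable: inf_{x∈X₀} η(x) ≤ P_U(⋂_{x∈X₀} U_x). -/
open MeasureTheory Set

/-!
If `u` lies outside `A = ⋂_{x ∈ X₀} U_x`, say `u ∉ U_x`, then `S ⊆ U_x` forces `u ∉ S`, so the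
plausibility `Q(u) = P(u ∉ S)` is at least `η = inf_{x ∈ X₀} η(x)`. Hence `Aᶜ ⊆ {Q ≥ c}` for every
`c < η`, and validity gives `P_U(Aᶜ) ≤ 1 - c`, i.e. `c ≤ P_U(A)`.
-/

open scoped ENNReal

lemma biInf_measure_subset_le_measure_notMem {U 𝒳 Ω : Type*} [MeasurableSpace Ω] (P : Measure Ω)
    (S : Ω → Set U) (Ux : 𝒳 → Set U) {X₀ : Set 𝒳} {u : U} (hu : u ∉ ⋂ x ∈ X₀, Ux x) :
    ⨅ x ∈ X₀, P {ω | S ω ⊆ Ux x} ≤ P {ω | u ∉ S ω} := by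
  simp only [mem_iInter, not_forall] at hu
  obtain ⟨x, hx, hux⟩ := hu
  exact (biInf_le _ hx).trans (measure_mono fun ω hω huS => hux (hω huS))

section

variable {U : Type*} [MeasurableSpace U]

lemma measure_le_one_sub_of_forall_ofReal {μ : Measure U} {f : U → ℝ≥0∞}
    (hf : ∀ α ∈ Ioo (0:ℝ) 1, μ {u | ENNReal.ofReal (1 - α) ≤ f u} ≤ ENNReal.ofReal α)
    {c : ℝ≥0∞} (hc₀ : 0 < c) (hc₁ : c < 1) :
    μ {u | c ≤ f u} ≤ 1 - c := by
  have hc_top : c ≠ ⊤ := hc₁.ne_top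
  set t := c.toReal
  have ht₀ : 0 < t := ENNReal.toReal_pos hc₀.ne' hc_top
  have ht₁ : t < 1 := ENNReal.toReal_lt_of_lt_ofReal (by simpa using hc₁)
  have hct : c = ENNReal.ofReal t := (ENNReal.ofReal_toReal hc_top).symm
  have key := hf (1 - t) ⟨by linarith, by linarith⟩
  rwa [sub_sub_cancel, ← hct, ENNReal.ofReal_sub _ ht₀.le, ENNReal.ofReal_one, ← hct] at key

lemma le_measure_of_measure_compl_le (μ : Measure U) [IsProbabilityMeasure μ] {A : Set U}
    {c : ℝ≥0∞} (hc : c ≤ 1) (hA : μ Aᶜ ≤ 1 - c) : c ≤ μ A := by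
  have h : 1 ≤ μ A + (1 - c) :=
    calc (1 : ℝ≥0∞) = μ (A ∪ Aᶜ) := by rw [union_compl_self, measure_univ]
      _ ≤ μ A + μ Aᶜ := measure_union_le A Aᶜ
      _ ≤ μ A + (1 - c) := by gcongr
  rwa [← tsub_le_iff_right, ENNReal.sub_sub_cancel ENNReal.one_ne_top hc] at h

end

theorem complete_class_lemma_general {U 𝒳 Ω : Type*} [MeasurableSpace U] [MeasurableSpace Ω]
    (μ : Measure U) [IsProbabilityMeasure μ]
    (P : Measure Ω) [IsProbabilityMeasure P]
    (S : Ω → Set U)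
    (hvalid : ∀ α ∈ Set.Ioo (0:ℝ) 1,
      μ {u | ENNReal.ofReal (1 - α) ≤ P {ω | u ∉ S ω}} ≤ ENNReal.ofReal α)
    (Ux : 𝒳 → Set U)
    (X₀ : Set 𝒳) (hX₀ : X₀.Nonempty) :
    ⨅ x ∈ X₀, P {ω | S ω ⊆ Ux x} ≤ μ (⋂ x ∈ X₀, Ux x) := by
  refine le_of_forall_lt_imp_le_of_dense fun c hc => ?_
  rcases eq_or_ne c 0 with rfl | hc₀
  · exact zero_le
  obtain ⟨x, hx⟩ := hX₀
  have hc₁ : c < 1 := hc.trans_le ((biInf_le _ hx).trans prob_le_one)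
  refine le_measure_of_measure_compl_le μ hc₁.le ?_
  calc μ (⋂ x ∈ X₀, Ux x)ᶜ ≤ μ {u | c ≤ P {ω | u ∉ S ω}} :=
        measure_mono fun u hu => hc.le.trans (biInf_measure_subset_le_measure_notMem P S Ux hu)
    _ ≤ 1 - c := measure_le_one_sub_of_forall_ofReal hvalid (pos_iff_ne_zero.2 hc₀) hc₁

/-- Lemma 0 (key lemma for the complete-class theorem): let `S` be a valid predictive
random set on `(U, μ)`, let `{U_x : x ∈ 𝒳}` be measurable subsets of `U`, and set
`η(x) = P(S ⊆ U_x)`. Then for any (nonempty) `X₀ ⊆ 𝒳` with `⋂_{x ∈ X₀} U_x` measurable,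
`inf_{x ∈ X₀} η(x) ≤ μ(⋂_{x ∈ X₀} U_x)`. -/
theorem complete_class_lemma {U 𝒳 Ω : Type*} [MeasurableSpace U] [MeasurableSpace Ω]
    (μ : Measure U) [IsProbabilityMeasure μ]
    (P : Measure Ω) [IsProbabilityMeasure P]
    (S : Ω → Set U)
    (hvalid : ∀ α ∈ Set.Ioo (0:ℝ) 1,
      μ {u | ENNReal.ofReal (1 - α) ≤ P {ω | u ∉ S ω}} ≤ ENNReal.ofReal α)
    (Ux : 𝒳 → Set U) (hmeas : ∀ x, MeasurableSet (Ux x))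
    (X₀ : Set 𝒳) (hX₀ : X₀.Nonempty) (hinter : MeasurableSet (⋂ x ∈ X₀, Ux x)) :
    ⨅ x ∈ X₀, P {ω | S ω ⊆ Ux x} ≤ μ (⋂ x ∈ X₀, Ux x) :=
  complete_class_lemma_general μ P S hvalid Ux X₀ hX₀
end

section
/- (Complete-class property of nested predictive random sets.) Fix A ⊆ Θ and assume Θ_x(u) ≠ ∅ for all x, u, and (in the non-discrete case) that each a-event U_x(A) = {u : Θ_x(u) ⊆ A} is closed. Given any valid predictive random set S with belief function b(x) = bel_x(A; S), define S'_x = ⋂_{y : b(y) ≥ b(x)} U_y(A) and let S' be the nested random set supported on {S'_x} ∪ {∅, U} with P(S' ⊆ K) = sup{P_U(S'_x) : S'_x ⊆ K}. Then S' is valid and bel_x(A; S') ≥ bel_x(A; S) for every x. -/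
/-!
Validity of `S'`: if `S'` misses `u` with probability `> t`, then `u` lies outside the
intersection of the sets `S'_x` of measure `> t`. The `S'_x` form a chain indexed by the values
`b x`, so this intersection is already the intersection of a countable subchain, and hence
still has measure `≥ t`.

Efficiency: `u ∉ S'_x` means `u ∉ U_y(A)` for some `y` with `b(y) ≥ b(x)`, so `S` misses `u`
with probability `≥ b(x)`; validity of `S` turns this into `μ(S'_x) ≥ b(x)`, and `S'_x ⊆ U_x(A)`.
-/

open MeasureTheory Set
open scoped ENNReal

lemma ENNReal.le_one_sub_comm {a b : ℝ≥0∞} (ha : a ≤ 1) (hb : b ≤ 1) :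
    a ≤ 1 - b ↔ b ≤ 1 - a := by
  rw [le_sub_iff_add_le_right (ne_top_of_le_ne_top one_ne_top hb) hb,
    le_sub_iff_add_le_left (ne_top_of_le_ne_top one_ne_top ha) ha]

lemma exists_seq_mem_forall_le {L : Type*} [CompleteLinearOrder L] [TopologicalSpace L]
    [OrderTopology L] [FirstCountableTopology L] {s : Set L} (hs : s.Nonempty) :
    ∃ v : ℕ → L, (∀ n, v n ∈ s) ∧ ∀ a ∈ s, ∃ n, v n ≤ a := by
  by_cases hmin : sInf s ∈ s
  · exact ⟨fun _ ↦ sInf s, fun _ ↦ hmin, fun a ha ↦ ⟨0, sInf_le ha⟩⟩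
  obtain ⟨v, -, hv, hvs⟩ := exists_seq_tendsto_sInf hs (OrderBot.bddBelow s)
  refine ⟨v, hvs, fun a ha ↦ ?_⟩
  have hlt : sInf s < a := (sInf_le ha).lt_of_ne fun h ↦ hmin (h ▸ ha)
  exact (hv.eventually (gt_mem_nhds hlt)).exists.imp fun _ ↦ le_of_lt

lemma directed_supset_of_le_imp_subset {α ι κ L : Type*} [LinearOrder L] {b : ι → L}
    {F : ι → Set α} (hF : ∀ x y, b x ≤ b y → F x ⊆ F y) (x : κ → ι) :
    Directed (· ⊇ ·) fun n ↦ F (x n) := fun i j ↦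
  (le_total (b (x i)) (b (x j))).elim (fun h ↦ ⟨i, subset_rfl, hF _ _ h⟩)
    fun h ↦ ⟨j, hF _ _ h, subset_rfl⟩

/-- The a-event `U_x(A)` of the paper, where `Θ_x(u) = {θ | x = a θ u}`. -/
def aEvent {Θ U 𝒳 : Type*} (a : Θ → U → 𝒳) (A : Set Θ) (x : 𝒳) : Set U :=
  {u | {θ' : Θ | x = a θ' u} ⊆ A}

lemma iUnion_subset_iff_subset_aEvent {Θ U 𝒳 : Type*} {a : Θ → U → 𝒳} {A : Set Θ} {x : 𝒳}
    {s : Set U} : (⋃ u ∈ s, {θ' : Θ | x = a θ' u}) ⊆ A ↔ s ⊆ aEvent a A x :=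
  iUnion₂_subset_iff

section RandomSets

variable {U : Type*} [MeasurableSpace U] {μ : Measure U}

/-- Validity of a predictive random set, in terms of its non-coverage function
`γ u = P(u ∉ S)`. -/
def IsValid (μ : Measure U) (γ : U → ℝ≥0∞) : Prop :=
  ∀ α ∈ Ioo (0 : ℝ) 1, μ {u | ENNReal.ofReal (1 - α) ≤ γ u} ≤ ENNReal.ofReal α

section Validity

variable [IsProbabilityMeasure μ] {γ : U → ℝ≥0∞}

theorem isValid_iff : IsValid μ γ ↔ ∀ t < 1, μ {u | t ≤ γ u} ≤ 1 - t := by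
  constructor
  · intro h t ht
    rcases eq_or_ne t 0 with rfl | ht0
    · simp
    have htop : t ≠ ⊤ := ht.ne_top
    have ht1 : t.toReal < 1 := by
      simpa using (ENNReal.toReal_lt_toReal htop ENNReal.one_ne_top).2 ht
    have := h (1 - t.toReal) ⟨by linarith, by linarith [ENNReal.toReal_pos ht0 htop]⟩
    rwa [sub_sub_cancel, ENNReal.ofReal_toReal htop, ENNReal.ofReal_sub _ ENNReal.toReal_nonneg,
      ENNReal.ofReal_one, ENNReal.ofReal_toReal htop] at this
  · intro h α hα
    calc μ {u | ENNReal.ofReal (1 - α) ≤ γ u} ≤ 1 - ENNReal.ofReal (1 - α) :=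
          h _ (ENNReal.ofReal_lt_one.2 (by linarith [hα.1]))
      _ = ENNReal.ofReal α := by
          rw [← ENNReal.ofReal_one, ← ENNReal.ofReal_sub _ (by linarith [hα.2]), sub_sub_cancel]

lemma measure_le_le_one_sub_of_lt (h : ∀ t, μ {u | t < γ u} ≤ 1 - t) {t : ℝ≥0∞} (ht : t ≤ 1) :
    μ {u | t ≤ γ u} ≤ 1 - t := by
  rw [ENNReal.le_one_sub_comm prob_le_one ht]
  refine le_of_forall_lt_imp_le_of_dense fun s hs ↦ ?_
  rw [ENNReal.le_one_sub_comm (hs.trans_le ht).le prob_le_one]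
  exact (measure_mono fun u hu ↦ hs.trans_le hu).trans (h s)

lemma IsValid.le_measure_of_compl_subset (hγ : IsValid μ γ) {β : ℝ≥0∞} (hβ : β ≤ 1)
    {G : Set U} (hG : Gᶜ ⊆ {u | β ≤ γ u}) : β ≤ μ G := by
  refine le_of_forall_lt_imp_le_of_dense fun t ht ↦ ?_
  have hcompl : μ Gᶜ ≤ 1 - t := (measure_mono fun u hu ↦ ht.le.trans (hG hu)).trans
    (isValid_iff.1 hγ t (ht.trans_le hβ))
  rw [ENNReal.le_one_sub_comm prob_le_one (ht.trans_le hβ).le] at hcompl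
  rw [← measure_univ (μ := μ)] at hcompl
  exact hcompl.trans (tsub_le_iff_right.2 (measure_univ_le_add_compl G))

lemma IsValid.le_measure_biInter {Ω ι : Type*} [MeasurableSpace Ω] {P : Measure Ω}
    [IsProbabilityMeasure P] {S : Ω → Set U} (hS : IsValid μ fun u ↦ P {ω | u ∉ S ω})
    {E : ι → Set U} {b : ι → ℝ≥0∞} (hb : ∀ y, b y = P {ω | S ω ⊆ E y}) (x : ι) :
    b x ≤ μ (⋂ y ∈ {y | b x ≤ b y}, E y) := by
  refine hS.le_measure_of_compl_subset (hb x ▸ prob_le_one) fun u hu ↦ ?_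
  simp only [mem_compl_iff, mem_iInter₂, not_forall] at hu
  obtain ⟨y, hxy, huy⟩ := hu
  calc b x ≤ b y := hxy
    _ = P {ω | S ω ⊆ E y} := hb y
    _ ≤ P {ω | u ∉ S ω} := measure_mono fun ω hω hu ↦ huy (hω hu)

end Validity

section Nested

variable {ι L : Type*} [CompleteLinearOrder L] [TopologicalSpace L] [OrderTopology L]
  [FirstCountableTopology L] {b : ι → L} {F : ι → Set U}

theorem measure_lt_iSup_notMem_le [IsProbabilityMeasure μ]
    (hF : ∀ x y, b x ≤ b y → F x ⊆ F y) (hmeas : ∀ x, MeasurableSet (F x)) (t : ℝ≥0∞) :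
    μ {u | t < ⨆ x, ⨆ _ : u ∉ F x, μ (F x)} ≤ 1 - t := by
  set X := {x | t < μ (F x)}
  have hsub : {u | t < ⨆ x, ⨆ _ : u ∉ F x, μ (F x)} ⊆ ⋃ y ∈ X, (F y)ᶜ := fun u hu ↦ by
    obtain ⟨y, hy⟩ := lt_iSup_iff.1 (show t < _ from hu)
    obtain ⟨huy, hty⟩ := lt_iSup_iff.1 hy
    exact mem_biUnion hty huy
  rcases X.eq_empty_or_nonempty with hX | hX
  · rw [hX, biUnion_empty, subset_empty_iff] at hsub
    simp [hsub]
  obtain ⟨v, hvX, hv⟩ := exists_seq_mem_forall_le (hX.image b)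
  choose x hxX hxv using hvX
  set W := ⋂ n, F (x n)
  have hWmeas : MeasurableSet W := .iInter fun n ↦ hmeas _
  -- the countable subchain `F (x n)` already cuts out every `F y` with `y ∈ X`
  have hWsub : ⋃ y ∈ X, (F y)ᶜ ⊆ Wᶜ := iUnion₂_subset fun y hy ↦ by
    obtain ⟨n, hn⟩ := hv _ (mem_image_of_mem b hy)
    exact compl_subset_compl.2 ((iInter_subset _ n).trans (hF _ _ ((hxv n).trans_le hn)))
  have htW : t ≤ μ W := by
    rw [(directed_supset_of_le_imp_subset hF x).measure_iInter
      (fun n ↦ (hmeas _).nullMeasurableSet) ⟨0, measure_ne_top μ _⟩]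
    exact le_iInf fun n ↦ (hxX n).le
  calc μ {u | t < ⨆ x, ⨆ _ : u ∉ F x, μ (F x)} ≤ μ Wᶜ := measure_mono (hsub.trans hWsub)
    _ = 1 - μ W := prob_compl_eq_one_sub hWmeas
    _ ≤ 1 - t := tsub_le_tsub_left htW 1

lemma measure_notMem_le_iSup_of_law {Ω' : Type*} [MeasurableSpace Ω'] {P' : Measure Ω'}
    {S' : Ω' → Set U} (hlaw : ∀ K : Set U, P' {ω' | S' ω' ⊆ K}
      = ⨆ T ∈ insert (∅ : Set U) (insert univ (range F)), ⨆ _ : T ⊆ K, μ T) (u : U) :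
    P' {ω' | u ∉ S' ω'} ≤ ⨆ x, ⨆ _ : u ∉ F x, μ (F x) := by
  have hnotMem : {ω' | u ∉ S' ω'} = {ω' | S' ω' ⊆ {u}ᶜ} := by
    ext; exact subset_compl_singleton_iff.symm
  rw [hnotMem, hlaw]
  refine iSup₂_le fun T hT ↦ iSup_le fun hTu ↦ ?_
  rcases hT with rfl | rfl | ⟨x, rfl⟩
  · simp
  · exact absurd (hTu (mem_univ u)) (by simp)
  · exact le_iSup₂_of_le x (subset_compl_singleton_iff.1 hTu) le_rfl

theorem isValid_of_law_nested [IsProbabilityMeasure μ] {Ω' : Type*} [MeasurableSpace Ω']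
    {P' : Measure Ω'} {S' : Ω' → Set U} (hF : ∀ x y, b x ≤ b y → F x ⊆ F y)
    (hmeas : ∀ x, MeasurableSet (F x)) (hlaw : ∀ K : Set U, P' {ω' | S' ω' ⊆ K}
      = ⨆ T ∈ insert (∅ : Set U) (insert univ (range F)), ⨆ _ : T ⊆ K, μ T) :
    IsValid μ fun u ↦ P' {ω' | u ∉ S' ω'} :=
  isValid_iff.2 fun _ ht ↦ measure_le_le_one_sub_of_lt
    (fun s ↦ (measure_mono fun u hu ↦ hu.trans_le (measure_notMem_le_iSup_of_law hlaw u)).trans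
      (measure_lt_iSup_notMem_le hF hmeas s)) ht.le

end Nested

end RandomSets

theorem complete_class_nested_general {U 𝒳 Θ Ω Ω' : Type*}
    [TopologicalSpace U] [MeasurableSpace U] [OpensMeasurableSpace U]
    [MeasurableSpace Ω] [MeasurableSpace Ω']
    (μ : Measure U) [IsProbabilityMeasure μ]
    (P : Measure Ω) [IsProbabilityMeasure P]
    (P' : Measure Ω')
    (a : Θ → U → 𝒳) (A : Set Θ)
    (hclosed : ∀ x : 𝒳, IsClosed {u : U | {θ' : Θ | x = a θ' u} ⊆ A})
    (S : Ω → Set U)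
    (hvalid : ∀ α ∈ Set.Ioo (0:ℝ) 1,
      μ {u | ENNReal.ofReal (1 - α) ≤ P {ω | u ∉ S ω}} ≤ ENNReal.ofReal α)
    -- the belief function of `S` at `A`:
    (b : 𝒳 → ENNReal)
    (hb : ∀ x : 𝒳, b x = P {ω | (⋃ u ∈ S ω, {θ' : Θ | x = a θ' u}) ⊆ A})
    -- the new nested supports `S'_x = ⋂ {U_y(A) : b(y) ≥ b(x)}`:
    (S'set : 𝒳 → Set U)
    (hS'set : ∀ x : 𝒳,
      S'set x = ⋂ y ∈ {y : 𝒳 | b x ≤ b y}, {u : U | {θ' : Θ | y = a θ' u} ⊆ A})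
    -- `S'` is a random set supported on `{S'_x : x} ∪ {∅, univ}` with the stated law:
    (S' : Ω' → Set U)
    (hdist : ∀ K : Set U,
      P' {ω' | S' ω' ⊆ K}
        = ⨆ T ∈ insert (∅ : Set U) (insert Set.univ (Set.range S'set)),
            ⨆ _ : T ⊆ K, μ T) :
    (∀ α ∈ Set.Ioo (0:ℝ) 1,
      μ {u | ENNReal.ofReal (1 - α) ≤ P' {ω' | u ∉ S' ω'}} ≤ ENNReal.ofReal α) ∧
    (∀ x : 𝒳,
      b x ≤ P' {ω' | (⋃ u ∈ S' ω', {θ' : Θ | x = a θ' u}) ⊆ A}) := by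
  have hbS : ∀ y, b y = P {ω | S ω ⊆ aEvent a A y} := fun y ↦ by
    simp only [hb, iUnion_subset_iff_subset_aEvent]
  have hS'mono : ∀ x y, b x ≤ b y → S'set x ⊆ S'set y := fun x y hxy ↦ by
    rw [hS'set, hS'set]
    exact biInter_subset_biInter_left fun z hz ↦ hxy.trans hz
  have hS'meas : ∀ x, MeasurableSet (S'set x) := fun x ↦
    (hS'set x ▸ isClosed_biInter fun y _ ↦ hclosed y).measurableSet
  have hS'bel : ∀ x, b x ≤ μ (S'set x) := fun x ↦
    hS'set x ▸ IsValid.le_measure_biInter hvalid hbS x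
  refine ⟨isValid_of_law_nested hS'mono hS'meas hdist, fun x ↦ ?_⟩
  simp only [iUnion_subset_iff_subset_aEvent, hdist]
  exact le_iSup₂_of_le (S'set x) (by simp)
    (le_iSup_of_le (hS'set x ▸ biInter_subset_of_mem (le_refl (b x))) (hS'bel x))

/-- Theorem 3' (complete-class property of nested predictive random sets): fix an
assertion `A` and assume `Θ_x(u) ≠ ∅` for all `x, u` and that each a-event
`U_x(A) = {u : Θ_x(u) ⊆ A}` is closed. Given any valid predictive random set `S` with
belief function `b(x) = bel_x(A;S)`, define `S'_x = ⋂_{y : b(y) ≥ b(x)} U_y(A)` and let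
`S'` be the nested random set supported on `{S'_x} ∪ {∅, univ}` with
`P'(S' ⊆ K) = sup{μ(T) : T in the support, T ⊆ K}`. Then `S'` is valid and
`bel_x(A;S') ≥ bel_x(A;S)` for every `x`. -/
theorem complete_class_nested {U 𝒳 Θ Ω Ω' : Type*}
    [TopologicalSpace U] [MeasurableSpace U] [OpensMeasurableSpace U]
    [MeasurableSpace Ω] [MeasurableSpace Ω']
    (μ : Measure U) [IsProbabilityMeasure μ]
    (P : Measure Ω) [IsProbabilityMeasure P]
    (P' : Measure Ω') [IsProbabilityMeasure P']
    (a : Θ → U → 𝒳) (A : Set Θ)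
    (hne : ∀ (x : 𝒳) (u : U), {θ' : Θ | x = a θ' u}.Nonempty)
    (hclosed : ∀ x : 𝒳, IsClosed {u : U | {θ' : Θ | x = a θ' u} ⊆ A})
    (S : Ω → Set U)
    (hvalid : ∀ α ∈ Set.Ioo (0:ℝ) 1,
      μ {u | ENNReal.ofReal (1 - α) ≤ P {ω | u ∉ S ω}} ≤ ENNReal.ofReal α)
    -- the belief function of `S` at `A`:
    (b : 𝒳 → ENNReal)
    (hb : ∀ x : 𝒳, b x = P {ω | (⋃ u ∈ S ω, {θ' : Θ | x = a θ' u}) ⊆ A})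
    -- the new nested supports `S'_x = ⋂ {U_y(A) : b(y) ≥ b(x)}`:
    (S'set : 𝒳 → Set U)
    (hS'set : ∀ x : 𝒳,
      S'set x = ⋂ y ∈ {y : 𝒳 | b x ≤ b y}, {u : U | {θ' : Θ | y = a θ' u} ⊆ A})
    -- `S'` is a random set supported on `{S'_x : x} ∪ {∅, univ}` with the stated law:
    (S' : Ω' → Set U)
    (hsupp : ∀ ω', S' ω' ∈ insert (∅ : Set U) (insert Set.univ (Set.range S'set)))
    (hdist : ∀ K : Set U,
      P' {ω' | S' ω' ⊆ K}
        = ⨆ T ∈ insert (∅ : Set U) (insert Set.univ (Set.range S'set)),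
            ⨆ _ : T ⊆ K, μ T) :
    (∀ α ∈ Set.Ioo (0:ℝ) 1,
      μ {u | ENNReal.ofReal (1 - α) ≤ P' {ω' | u ∉ S' ω'}} ≤ ENNReal.ofReal α) ∧
    (∀ x : 𝒳,
      b x ≤ P' {ω' | (⋃ u ∈ S' ω', {θ' : Θ | x = a θ' u}) ⊆ A}) :=
  complete_class_nested_general μ P P' a A hclosed S hvalid b hb S'set hS'set S' hdist
end

section
/- (Score-balance characterization of local unbiasedness.) Let {f_θ} be a regular one-parameter family of densities, T_θ(x) = ∂/∂θ log f_θ(x), V_θ(x) = T_θ(x)² + ∂/∂θ T_θ(x), and suppose a predictive random set S_B satisfies bel_X({θ₀}ᶜ; S_B) ~ Unif(0,1) under P_{X|θ₀}, with rejection regions of the form {x : T_{θ₀}(x) ∈ B_t}. Then the second-order Taylor condition 'ψ_α(θ) < ψ_α(θ₀) for all θ near θ₀ and all α' holds if and only if (i) ∫_{T_{θ₀}(x)∈B_t} T_{θ₀}(x) f_{θ₀}(x) dx = 0 for all t (score-balance) and (ii) ∫_{T_{θ₀}(x)∈B_t} V_{θ₀}(x) f_{θ₀}(x) dx < 0 for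 all t. -/
open MeasureTheory Set

/-- The score function `T_θ(x) = ∂/∂θ log f_θ(x)`. -/
noncomputable def scoreT (f : ℝ → ℝ → ℝ) (θ x : ℝ) : ℝ :=
  deriv (fun θ' => Real.log (f θ' x)) θ

/-- `V_θ(x) = T_θ(x)² + ∂/∂θ T_θ(x)`. -/
noncomputable def scoreV (f : ℝ → ℝ → ℝ) (θ x : ℝ) : ℝ :=
  (scoreT f θ x) ^ 2 + deriv (fun θ' => scoreT f θ' x) θ

lemma quad_neg_iff (a b : ℝ) :
    (∃ ε > 0, ∀ h : ℝ, h ≠ 0 → |h| < ε → a * h + (1/2) * b * h ^ 2 < 0) ↔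
      a = 0 ∧ b < 0 := by
  constructor
  · rintro ⟨ε, hε, H⟩
    have ha : a = 0 := by
      by_contra ha
      have habs : 0 < |a| := abs_pos.mpr ha
      set δ : ℝ := min (ε/2) (|a|/(|b|+1)) with hδdef
      have hb1 : 0 < |b| + 1 := by positivity
      have hδpos : 0 < δ := lt_min (by linarith) (by positivity)
      have hδε : δ < ε := lt_of_le_of_lt (min_le_left _ _) (by linarith)
      have hδa : δ * (|b| + 1) ≤ |a| := by
        have := min_le_right (ε/2) (|a|/(|b|+1))
        calc δ * (|b| + 1) ≤ (|a|/(|b|+1)) * (|b|+1) := by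
              exact mul_le_mul_of_nonneg_right this (le_of_lt hb1)
          _ = |a| := by field_simp
      set h : ℝ := if 0 < a then δ else -δ with hhdef
      have hh0 : h ≠ 0 := by
        rcases le_or_gt a 0 with h1 | h1
        · simp [hhdef, not_lt.mpr h1]; linarith
        · simp [hhdef, h1]; linarith
      have hhabs : |h| = δ := by
        rcases le_or_gt a 0 with h1 | h1
        · simp [hhdef, not_lt.mpr h1, abs_of_pos hδpos]
        · simp [hhdef, h1, abs_of_pos hδpos]
      have hah : a * h = |a| * δ := by
        rcases le_or_gt a 0 with h1 | h1
        · simp only [hhdef, if_neg (not_lt.mpr h1), abs_of_nonpos h1]; ring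
        · simp [hhdef, h1, abs_of_pos h1]
      have hkey := H h hh0 (by rw [hhabs]; exact hδε)
      have hbh : (1/2) * b * h ^ 2 ≥ -(|b| * δ ^ 2 / 2) := by
        have hsq : h ^ 2 = δ ^ 2 := by rw [← sq_abs, hhabs]
        rw [hsq]
        have : -|b| ≤ b := neg_abs_le b
        nlinarith [sq_nonneg δ]
      -- |a|δ - |b|δ²/2 > 0 since δ(|b|+1) ≤ |a| hence |b|δ²/2 ≤ ... < |a|δ
      have : |b| * δ ^ 2 / 2 < |a| * δ := by
        nlinarith [hδpos, hδa]
      linarith [hkey, hbh, hah ▸ hkey]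
    refine ⟨ha, ?_⟩
    have hkey := H (ε/2) (by positivity) (by rw [abs_of_pos (by linarith : (0:ℝ) < ε/2)]; linarith)
    rw [ha] at hkey
    nlinarith [sq_nonneg (ε/2), hε]
  · rintro ⟨ha, hb⟩
    refine ⟨1, one_pos, fun h hh0 _ => ?_⟩
    rw [ha]
    have : 0 < h ^ 2 := by positivity
    nlinarith

/-- Score-balance characterization of local unbiasedness (Proposition A.1): with
`ψ_t(θ) = ∫_{T_{θ₀}(x) ∈ B_t} f_θ(x) dx` admitting the exact second-order Taylor
expansion (regularity: differentiation under the integral, remainder ignored), the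
condition `ψ_t(θ) < ψ_t(θ₀)` for all `θ ≠ θ₀` near `θ₀` and all `t` holds if and only
if (i) the score-balance condition `∫_{T_{θ₀}(x)∈B_t} T_{θ₀}(x) f_{θ₀}(x) dx = 0` holds
for all `t`, and (ii) `∫_{T_{θ₀}(x)∈B_t} V_{θ₀}(x) f_{θ₀}(x) dx < 0` for all `t`. -/
theorem score_balance_characterization {𝕋 : Type*} (f : ℝ → ℝ → ℝ) (θ₀ : ℝ)
    (B : 𝕋 → Set ℝ)
    (hTaylor : ∀ (t : 𝕋) (θ : ℝ),
      (∫ x in {x : ℝ | scoreT f θ₀ x ∈ B t}, f θ x)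
        = (∫ x in {x : ℝ | scoreT f θ₀ x ∈ B t}, f θ₀ x)
          + (∫ x in {x : ℝ | scoreT f θ₀ x ∈ B t}, scoreT f θ₀ x * f θ₀ x) * (θ - θ₀)
          + (1/2) * (∫ x in {x : ℝ | scoreT f θ₀ x ∈ B t}, scoreV f θ₀ x * f θ₀ x)
              * (θ - θ₀) ^ 2) :
    (∀ t : 𝕋, ∃ ε > 0, ∀ θ : ℝ, θ ≠ θ₀ → |θ - θ₀| < ε →
        (∫ x in {x : ℝ | scoreT f θ₀ x ∈ B t}, f θ x)
          < ∫ x in {x : ℝ | scoreT f θ₀ x ∈ B t}, f θ₀ x)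
      ↔ ((∀ t : 𝕋, (∫ x in {x : ℝ | scoreT f θ₀ x ∈ B t}, scoreT f θ₀ x * f θ₀ x) = 0)
          ∧ (∀ t : 𝕋, (∫ x in {x : ℝ | scoreT f θ₀ x ∈ B t}, scoreV f θ₀ x * f θ₀ x) < 0)) := by
  set a : 𝕋 → ℝ := fun t => ∫ x in {x : ℝ | scoreT f θ₀ x ∈ B t}, scoreT f θ₀ x * f θ₀ x
  set b : 𝕋 → ℝ := fun t => ∫ x in {x : ℝ | scoreT f θ₀ x ∈ B t}, scoreV f θ₀ x * f θ₀ x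
  have hiff : ∀ t : 𝕋,
      (∃ ε > 0, ∀ θ : ℝ, θ ≠ θ₀ → |θ - θ₀| < ε →
        (∫ x in {x : ℝ | scoreT f θ₀ x ∈ B t}, f θ x)
          < ∫ x in {x : ℝ | scoreT f θ₀ x ∈ B t}, f θ₀ x) ↔
      (∃ ε > 0, ∀ h : ℝ, h ≠ 0 → |h| < ε → a t * h + (1/2) * b t * h ^ 2 < 0) := by
    intro t
    constructor
    · rintro ⟨ε, hε, H⟩
      refine ⟨ε, hε, fun h hh0 hhε => ?_⟩
      have := H (θ₀ + h) (by intro hc; apply hh0; linarith) (by simpa using hhε)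
      rw [hTaylor t (θ₀ + h)] at this
      have : a t * (θ₀ + h - θ₀) + 1/2 * b t * (θ₀ + h - θ₀) ^ 2 < 0 := by linarith
      simpa using this
    · rintro ⟨ε, hε, H⟩
      refine ⟨ε, hε, fun θ hθ0 hθε => ?_⟩
      have := H (θ - θ₀) (fun hc => hθ0 (by linarith)) hθε
      rw [hTaylor t θ]
      linarith
  constructor
  · intro H
    have h1 : ∀ t, a t = 0 ∧ b t < 0 := fun t => (quad_neg_iff (a t) (b t)).mp ((hiff t).mp (H t))
    exact ⟨fun t => (h1 t).1, fun t => (h1 t).2⟩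
  · rintro ⟨h1, h2⟩ t
    exact (hiff t).mpr ((quad_neg_iff (a t) (b t)).mpr ⟨h1 t, h2 t⟩)
end
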